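/- The writer-monad structure map on complexity types is a cost algebra: for each CBPV computation type B̲, the PCFc term α_B̲(c,x) defined by α_{F A}(c, x) = ⟨c ⊞ π₁ x, π₂ x⟩, α_{B̲₁ & B̲₂}(c, x) = ⟨α_{B̲₁}(c, π₁ x), α_{B̲₂}(c, π₂ x)⟩, and α_{A → B̲}(c, f) = λa. α_B̲(c, f a), satisfies the cost algebra law α_B̲(c₁ ⊞ c₂, x) ≤ α_B̲(c₁, α_B̲(c₂, x)) in the size order. -/

import Mathlib

set_option linter.unusedVariables false
namespace PCFc

/-- The arithmetic operations of PCF. -/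
inductive Op | add | mul | sub | div | mod
deriving DecidableEq

def Op.den : Op → ℕ → ℕ → ℕ
  | .add, a, b => a + b
  | .mul, a, b => a * b
  | .sub, a, b => a - b
  | .div, a, b => a / b
  | .mod, a, b => a % b

/-- Types of PCFc: natural numbers, costs, products and functions. -/
inductive Ty
  | nat | cost
  | prod (A B : Ty)
  | arrow (A B : Ty)
deriving DecidableEq

/-- Raw terms of PCFc in de Bruijn representation. `proj true` is the first
projection.  `czero`, `cone`, `cadd` are the cost constructs `0̂`, `1̂`, `⊞`. -/
inductive Tm
  | var : ℕ → Tm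
  | num : ℕ → Tm
  | op : Op → Tm → Tm → Tm
  | ifz : Tm → Tm → Tm → Tm
  | pair : Tm → Tm → Tm
  | proj : Bool → Tm → Tm
  | lam : Tm → Tm
  | app : Tm → Tm → Tm
  | fix : Tm → Tm
  | czero : Tm
  | cone : Tm
  | cadd : Tm → Tm → Tm
deriving DecidableEq

/-- Shift (by one) the de Bruijn variables `≥ c`. -/
def shift (c : ℕ) : Tm → Tm
  | .var n => if n < c then .var n else .var (n + 1)
  | .num n => .num n
  | .op o M N => .op o (shift c M) (shift c N)
  | .ifz M P Q => .ifz (shift c M) (shift c P) (shift c Q)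
  | .pair M N => .pair (shift c M) (shift c N)
  | .proj b M => .proj b (shift c M)
  | .lam M => .lam (shift (c + 1) M)
  | .app M N => .app (shift c M) (shift c N)
  | .fix M => .fix (shift (c + 1) M)
  | .czero => .czero
  | .cone => .cone
  | .cadd M N => .cadd (shift c M) (shift c N)

/-- Capture-avoiding substitution of `s` for the de Bruijn variable `k`. -/
def subst (s : Tm) : ℕ → Tm → Tm
  | k, .var n => if n = k then (shift 0)^[k] s else if k < n then .var (n - 1) else .var n
  | k, .num n => .num n
  | k, .op o M N => .op o (subst s k M) (subst s k N)
  | k, .ifz M P Q => .ifz (subst s k M) (subst s k P) (subst s k Q)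
  | k, .pair M N => .pair (subst s k M) (subst s k N)
  | k, .proj b M => .proj b (subst s k M)
  | k, .lam M => .lam (subst s (k + 1) M)
  | k, .app M N => .app (subst s k M) (subst s k N)
  | k, .fix M => .fix (subst s (k + 1) M)
  | _, .czero => .czero
  | _, .cone => .cone
  | k, .cadd M N => .cadd (subst s k M) (subst s k N)

/-- The cost numeral `⌜n⌝`, the right-associated sum of `n` unit costs. -/
def cnum : ℕ → Tm
  | 0 => .czero
  | n + 1 => .cadd .cone (cnum n)

/-- The `n`-th syntactic unfolding of `fix x. M`:
`fix⁰ x.M = fix x.x` and `fix^{n+1} x.M = M[fixⁿ x.M / x]`. -/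
def fixn (M : Tm) : ℕ → Tm
  | 0 => .fix (.var 0)
  | n + 1 => subst (fixn M n) 0 M

/-- Typing judgment `Γ ⊢ M : A` for PCFc (contexts are de Bruijn lists). -/
inductive HasTy : List Ty → Tm → Ty → Prop
  | var {Γ n A} : Γ[n]? = some A → HasTy Γ (.var n) A
  | num {Γ n} : HasTy Γ (.num n) .nat
  | op {Γ o M N} : HasTy Γ M .nat → HasTy Γ N .nat → HasTy Γ (.op o M N) .nat
  | ifz {Γ M P Q A} : HasTy Γ M .nat → HasTy Γ P A → HasTy Γ Q A →
      HasTy Γ (.ifz M P Q) A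
  | pair {Γ M N A B} : HasTy Γ M A → HasTy Γ N B → HasTy Γ (.pair M N) (.prod A B)
  | proj {Γ M A B b} : HasTy Γ M (.prod A B) → HasTy Γ (.proj b M) (cond b A B)
  | lam {Γ M A B} : HasTy (A :: Γ) M B → HasTy Γ (.lam M) (.arrow A B)
  | app {Γ M N A B} : HasTy Γ M (.arrow A B) → HasTy Γ N A → HasTy Γ (.app M N) B
  | fix {Γ M A} : HasTy (A :: Γ) M A → HasTy Γ (.fix M) A
  | czero {Γ} : HasTy Γ .czero .cost
  | cone {Γ} : HasTy Γ .cone .cost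
  | cadd {Γ M N} : HasTy Γ M .cost → HasTy Γ N .cost → HasTy Γ (.cadd M N) .cost

/-- Eliminative contexts `E ::= [] | πᵢ(E) | E M`. -/
inductive ECtx
  | hole
  | proj (b : Bool) (E : ECtx)
  | app (E : ECtx) (N : Tm)

/-- Filling the hole of an eliminative context. -/
def ECtx.fill : ECtx → Tm → Tm
  | .hole, M => M
  | .proj b E, M => .proj b (E.fill M)
  | .app E N, M => .app (E.fill M) N

/-- The size order `Γ ⊢ M ≤ N : A` of PCFc: a preorder closed under the
monotone contexts (principal positions of eliminations, bodies of
introductions of negative types, operands of arithmetic and cost sums),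
containing β-axioms (reduct ≤ redex), the cost axioms (zero) and (assoc),
the rational-chain axiom (rat) and computational induction (cpind). -/
inductive SizeLe : List Ty → Tm → Tm → Ty → Prop
  | refl {Γ M A} : HasTy Γ M A → SizeLe Γ M M A
  | trans {Γ M N P A} : SizeLe Γ M N A → SizeLe Γ N P A → SizeLe Γ M P A
  -- monotone contexts
  | proj_mono {Γ M M' A B b} : SizeLe Γ M M' (.prod A B) →
      SizeLe Γ (.proj b M) (.proj b M') (cond b A B)
  | app_mono {Γ M M' N A B} : SizeLe Γ M M' (.arrow A B) → HasTy Γ N A →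
      SizeLe Γ (.app M N) (.app M' N) B
  | ifz_mono {Γ N N' P Q A} : SizeLe Γ N N' .nat → HasTy Γ P A → HasTy Γ Q A →
      SizeLe Γ (.ifz N P Q) (.ifz N' P Q) A
  | lam_mono {Γ M M' A B} : SizeLe (A :: Γ) M M' B →
      SizeLe Γ (.lam M) (.lam M') (.arrow A B)
  | pair_mono {Γ M M' N N' A B} : SizeLe Γ M M' A → SizeLe Γ N N' B →
      SizeLe Γ (.pair M N) (.pair M' N') (.prod A B)
  | op_mono {Γ o M M' N N'} : SizeLe Γ M M' .nat → SizeLe Γ N N' .nat →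
      SizeLe Γ (.op o M N) (.op o M' N') .nat
  | cadd_mono {Γ M M' N N'} : SizeLe Γ M M' .cost → SizeLe Γ N N' .cost →
      SizeLe Γ (.cadd M N) (.cadd M' N') .cost
  -- β-axioms: reduct ≤ redex
  | beta_app {Γ M N A B} : HasTy (A :: Γ) M B → HasTy Γ N A →
      SizeLe Γ (subst N 0 M) (.app (.lam M) N) B
  | beta_proj {Γ M₁ M₂ A B b} : HasTy Γ M₁ A → HasTy Γ M₂ B →
      SizeLe Γ (cond b M₁ M₂) (.proj b (.pair M₁ M₂)) (cond b A B)
  | beta_ifz_zero {Γ P Q A} : HasTy Γ P A → HasTy Γ Q A →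
      SizeLe Γ P (.ifz (.num 0) P Q) A
  | beta_ifz_succ {Γ P Q A n} : HasTy Γ P A → HasTy Γ Q A →
      SizeLe Γ Q (.ifz (.num (n + 1)) P Q) A
  | beta_op {Γ o a b} : SizeLe Γ (.num (o.den a b)) (.op o (.num a) (.num b)) .nat
  -- cost axioms
  | czero_unit {Γ M} : HasTy Γ M .cost → SizeLe Γ M (.cadd .czero M) .cost
  | cadd_assoc {Γ L M N} : HasTy Γ L .cost → HasTy Γ M .cost → HasTy Γ N .cost →
      SizeLe Γ (.cadd (.cadd L M) N) (.cadd L (.cadd M N)) .cost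
  -- fixed point axioms
  | rat {Γ M A n} : HasTy (A :: Γ) M A →
      SizeLe Γ (fixn M (n + 1)) (fixn M n) A
  | cpind {Γ M E' A B} {E : ECtx} : HasTy (A :: Γ) E' A →
      (∀ n : ℕ, SizeLe Γ M (E.fill (fixn E' n)) B) →
      SizeLe Γ M (E.fill (.fix E')) B

/-- Canonical cost values and the cost they denote: `0̂` denotes `0`,
`1̂` denotes `1`, and a sum of canonical cost values denotes the sum. -/
inductive CVal : Tm → ℕ → Prop
  | zero : CVal .czero 0
  | one : CVal .cone 1
  | add {V W a b} : CVal V a → CVal W b → CVal (.cadd V W) (a + b)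

/-- The (costless) call-by-name big-step semantics `M ⇓ V` of PCFc. -/
inductive Evalc : Tm → Tm → Prop
  | num {n} : Evalc (.num n) (.num n)
  | op {o M N a b} : Evalc M (.num a) → Evalc N (.num b) →
      Evalc (.op o M N) (.num (o.den a b))
  | ifz_zero {M P Q V} : Evalc M (.num 0) → Evalc P V → Evalc (.ifz M P Q) V
  | ifz_succ {M P Q V k} : Evalc M (.num (k + 1)) → Evalc Q V → Evalc (.ifz M P Q) V
  | pair {M N} : Evalc (.pair M N) (.pair M N)
  | proj {M M₁ M₂ V b} : Evalc M (.pair M₁ M₂) → Evalc (cond b M₁ M₂) V →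
      Evalc (.proj b M) V
  | lam {M} : Evalc (.lam M) (.lam M)
  | app {M N B V} : Evalc M (.lam B) → Evalc (subst N 0 B) V → Evalc (.app M N) V
  | fix {M V} : Evalc (subst (.fix M) 0 M) V → Evalc (.fix M) V
  | czero : Evalc .czero .czero
  | cone : Evalc .cone .cone
  | cadd {M N V W a b} : Evalc M V → CVal V a → Evalc N W → CVal W b →
      Evalc (.cadd M N) (cnum (a + b))

/-- `M` is bounded: it evaluates to some canonical form. -/
def Bounded (M : Tm) : Prop := ∃ V, Evalc M V

end PCFc

namespace PCFc

mutual
/-- CBPV value types. -/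
inductive VTy
  | nat
  | prod (A B : VTy)
  | U (B : CTy)
/-- CBPV computation types. -/
inductive CTy
  | F (A : VTy)
  | nprod (B₁ B₂ : CTy)
  | arr (A : VTy) (B : CTy)
end

mutual
/-- The PCFc type of potentials of a CBPV value type. -/
def pot : VTy → Ty
  | .nat => .nat
  | .prod A B => .prod (pot A) (pot B)
  | .U B => compl B
/-- The PCFc carrier type of complexities of a CBPV computation type. -/
def compl : CTy → Ty
  | .F A => .prod .cost (pot A)
  | .nprod B₁ B₂ => .prod (compl B₁) (compl B₂)
  | .arr A B => .arrow (pot A) (compl B)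
end

/-- The writer-monad structure map `α_B̲(c, x)` on complexity types, as a
PCFc term-former in the terms `c` and `x`:
`α_{F A}(c,x) = ⟨c ⊞ π₁ x, π₂ x⟩`,
`α_{B̲₁ & B̲₂}(c,x) = ⟨α_{B̲₁}(c, π₁ x), α_{B̲₂}(c, π₂ x)⟩`, and
`α_{A → B̲}(c,f) = λa. α_B̲(c, f a)`. -/
def alphaT : CTy → Tm → Tm → Tm
  | .F _, c, x => .pair (.cadd c (.proj true x)) (.proj false x)
  | .nprod B₁ B₂, c, x => .pair (alphaT B₁ c (.proj true x)) (alphaT B₂ c (.proj false x))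
  | .arr _ B, c, x => .lam (alphaT B (shift 0 c) (.app (shift 0 x) (.var 0)))

/-! By induction on `B̲`. For `F A` the law is associativity of `⊞` together with β
for projections; for `B̲₁ & B̲₂` it follows componentwise from the induction hypotheses
and monotonicity of `α` in its second argument; for `A → B̲` it is the induction
hypothesis under the `λ`, after β-reducing `(λa. α(c₂, f a)) a`. Since `α` at arrow
types recurses under a binder on shifted terms, monotonicity and the law are proved in
arbitrary contexts, which needs weakening of typing and of the size order. -/

theorem shift_var (c n : ℕ) : shift c (.var n) = .var (if n < c then n else n + 1) := by
  simp only [shift]; split_ifs <;> rfl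

theorem shift_shift (M : Tm) {c d : ℕ} (h : d ≤ c) :
    shift (c + 1) (shift d M) = shift d (shift c M) := by
  induction M generalizing c d with
  | var n => simp only [shift_var, Tm.var.injEq]; split_ifs <;> omega
  | lam M ih | fix M ih => simp only [shift, ih (Nat.succ_le_succ h)]
  | _ => simp only [shift, *]

theorem shift_iterate_shift_zero (s : Tm) {k c : ℕ} (h : k ≤ c) :
    shift c ((shift 0)^[k] s) = (shift 0)^[k] (shift (c - k) s) := by
  induction k generalizing c with
  | zero => rfl
  | succ k ih =>
    obtain ⟨c, rfl⟩ := Nat.exists_eq_add_of_le' (Nat.zero_lt_of_lt h)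
    rw [Function.iterate_succ_apply', Function.iterate_succ_apply', shift_shift _ c.zero_le,
      ih (by omega), Nat.add_sub_add_right]

theorem iterate_shift_zero_var_zero (k : ℕ) : (shift 0)^[k] (.var 0) = .var k := by
  induction k with
  | zero => rfl
  | succ k ih => rw [Function.iterate_succ_apply', ih, shift_var, if_neg k.not_lt_zero]

theorem shift_subst (M s : Tm) {k c : ℕ} (h : k ≤ c) :
    shift c (subst s k M) = subst (shift (c - k) s) k (shift (c + 1) M) := by
  induction M generalizing k c with
  | var n =>
    rcases lt_trichotomy n k with hn | rfl | hn
    · simp only [subst, shift_var, if_neg hn.ne, if_neg hn.not_gt, if_pos (hn.trans_le h),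
        if_pos (hn.trans_le h.step)]
    · simp only [subst, shift_var, if_pos (Nat.lt_succ_of_le h), if_true,
        shift_iterate_shift_zero s h]
    · simp only [subst, shift_var, if_neg hn.ne', if_pos hn]
      split_ifs <;> first | omega | (congr 1 <;> omega)
  | lam M ih | fix M ih =>
    simp only [shift, subst, ih (Nat.succ_le_succ h), Nat.succ_sub_succ]
  | _ => simp only [shift, subst, *]

theorem subst_var_zero_shift_succ (M : Tm) (k : ℕ) : subst (.var 0) k (shift (k + 1) M) = M := by
  induction M generalizing k with
  | var n =>
    simp only [shift_var, subst]
    split_ifs <;> simp_all [iterate_shift_zero_var_zero] <;> omega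
  | _ => simp only [shift, subst, *]

theorem shift_fixn (M : Tm) (n c : ℕ) : shift c (fixn M n) = fixn (shift (c + 1) M) n := by
  induction n with
  | zero => rfl
  | succ n ih => rw [fixn, fixn, shift_subst _ _ c.zero_le, Nat.sub_zero, ih]

theorem shift_cond (c : ℕ) (b : Bool) (M N : Tm) :
    shift c (cond b M N) = cond b (shift c M) (shift c N) := by
  cases b <;> rfl

def ECtx.shift (c : ℕ) : ECtx → ECtx
  | .hole => .hole
  | .proj b E => .proj b (E.shift c)
  | .app E N => .app (E.shift c) (PCFc.shift c N)

theorem shift_fill (E : ECtx) (M : Tm) (c : ℕ) :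
    shift c (E.fill M) = (E.shift c).fill (shift c M) := by
  induction E with
  | hole => rfl
  | proj b E ih | app E N ih => simp only [ECtx.fill, ECtx.shift, shift, ih]

theorem HasTy.weaken {Γ : List Ty} {M : Tm} {A : Ty} (h : HasTy Γ M A) (c : ℕ) (A' : Ty) :
    HasTy (Γ.insertIdx c A') (shift c M) A := by
  induction h generalizing c with
  | @var Γ n A hn =>
    rw [shift_var]
    split_ifs with hc
    · exact .var (by rwa [List.getElem?_insertIdx_of_lt hc])
    · exact .var (by rwa [List.getElem?_insertIdx_of_gt (by omega), Nat.add_sub_cancel])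
  | num => exact .num
  | op _ _ ih₁ ih₂ => exact .op (ih₁ c) (ih₂ c)
  | ifz _ _ _ ih₁ ih₂ ih₃ => exact .ifz (ih₁ c) (ih₂ c) (ih₃ c)
  | pair _ _ ih₁ ih₂ => exact .pair (ih₁ c) (ih₂ c)
  | proj _ ih => exact .proj (ih c)
  | lam _ ih => exact .lam (ih (c + 1))
  | app _ _ ih₁ ih₂ => exact .app (ih₁ c) (ih₂ c)
  | fix _ ih => exact .fix (ih (c + 1))
  | czero => exact .czero
  | cone => exact .cone
  | cadd _ _ ih₁ ih₂ => exact .cadd (ih₁ c) (ih₂ c)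

theorem SizeLe.weaken {Γ : List Ty} {M N : Tm} {A : Ty} (h : SizeLe Γ M N A) (c : ℕ) (A' : Ty) :
    SizeLe (Γ.insertIdx c A') (shift c M) (shift c N) A := by
  induction h generalizing c with
  | refl h => exact .refl (h.weaken c A')
  | trans _ _ ih₁ ih₂ => exact .trans (ih₁ c) (ih₂ c)
  | proj_mono _ ih => exact .proj_mono (ih c)
  | app_mono _ hN ih => exact .app_mono (ih c) (hN.weaken c A')
  | ifz_mono _ hP hQ ih => exact .ifz_mono (ih c) (hP.weaken c A') (hQ.weaken c A')
  | lam_mono _ ih => exact .lam_mono (ih (c + 1))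
  | pair_mono _ _ ih₁ ih₂ => exact .pair_mono (ih₁ c) (ih₂ c)
  | op_mono _ _ ih₁ ih₂ => exact .op_mono (ih₁ c) (ih₂ c)
  | cadd_mono _ _ ih₁ ih₂ => exact .cadd_mono (ih₁ c) (ih₂ c)
  | beta_app hM hN =>
    rw [shift, shift_subst _ _ c.zero_le, Nat.sub_zero]
    exact .beta_app (hM.weaken (c + 1) A') (hN.weaken c A')
  | beta_proj h₁ h₂ =>
    rw [shift_cond]
    exact .beta_proj (h₁.weaken c A') (h₂.weaken c A')
  | beta_ifz_zero hP hQ => exact .beta_ifz_zero (hP.weaken c A') (hQ.weaken c A')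
  | beta_ifz_succ hP hQ => exact .beta_ifz_succ (hP.weaken c A') (hQ.weaken c A')
  | beta_op => exact .beta_op
  | czero_unit hM => exact .czero_unit (hM.weaken c A')
  | cadd_assoc hL hM hN => exact .cadd_assoc (hL.weaken c A') (hM.weaken c A') (hN.weaken c A')
  | rat hM =>
    rw [shift_fixn, shift_fixn]
    exact .rat (hM.weaken (c + 1) A')
  | cpind hE' _ ih =>
    rw [shift_fill]
    exact .cpind (hE'.weaken (c + 1) A') fun n => by rw [← shift_fixn, ← shift_fill]; exact ih n c

theorem SizeLe.le_app_shift_lam {Γ : List Ty} {A B : Ty} {K : Tm} (hK : HasTy (A :: Γ) K B) :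
    SizeLe (A :: Γ) K (.app (shift 0 (.lam K)) (.var 0)) B := by
  have := SizeLe.beta_app (hK.weaken 1 A) (.var (n := 0) rfl)
  rwa [subst_var_zero_shift_succ] at this

theorem hasTy_alphaT : ∀ (B : CTy) {Γ : List Ty} {c x : Tm},
    HasTy Γ c .cost → HasTy Γ x (compl B) → HasTy Γ (alphaT B c x) (compl B)
  | .F _, _, _, _, hc, hx => .pair (.cadd hc (.proj (b := true) hx)) (.proj (b := false) hx)
  | .nprod B₁ B₂, _, _, _, hc, hx =>
    .pair (hasTy_alphaT B₁ hc (.proj (b := true) hx)) (hasTy_alphaT B₂ hc (.proj (b := false) hx))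
  | .arr A B, _, _, _, hc, hx =>
    .lam (hasTy_alphaT B (hc.weaken 0 (pot A)) (.app (hx.weaken 0 (pot A)) (.var rfl)))

theorem alphaT_mono : ∀ (B : CTy) {Γ : List Ty} {c c' x x' : Tm},
    SizeLe Γ c c' .cost → SizeLe Γ x x' (compl B) →
    SizeLe Γ (alphaT B c x) (alphaT B c' x') (compl B)
  | .F _, _, _, _, _, _, hc, hx =>
    .pair_mono (.cadd_mono hc (.proj_mono (b := true) hx)) (.proj_mono (b := false) hx)
  | .nprod B₁ B₂, _, _, _, _, _, hc, hx =>
    .pair_mono (alphaT_mono B₁ hc (.proj_mono (b := true) hx))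
      (alphaT_mono B₂ hc (.proj_mono (b := false) hx))
  | .arr A B, _, _, _, _, _, hc, hx =>
    .lam_mono (alphaT_mono B (hc.weaken 0 (pot A))
      (.app_mono (hx.weaken 0 (pot A)) (.var rfl)))

theorem alphaT_cadd_le : ∀ (B : CTy) {Γ : List Ty} {c₁ c₂ x : Tm},
    HasTy Γ c₁ .cost → HasTy Γ c₂ .cost → HasTy Γ x (compl B) →
    SizeLe Γ (alphaT B (.cadd c₁ c₂) x) (alphaT B c₁ (alphaT B c₂ x)) (compl B)
  | .F A, Γ, c₁, c₂, x, h₁, h₂, hx => by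
    have hx₁ : HasTy Γ (.proj true x) .cost := .proj hx
    have hx₂ : HasTy Γ (.proj false x) (pot A) := .proj hx
    exact .pair_mono
      (.trans (.cadd_assoc h₁ h₂ hx₁)
        (.cadd_mono (.refl h₁) (.beta_proj (b := true) (.cadd h₂ hx₁) hx₂)))
      (.beta_proj (b := false) (.cadd h₂ hx₁) hx₂)
  | .nprod B₁ B₂, Γ, c₁, c₂, x, h₁, h₂, hx => by
    have hx₁ : HasTy Γ (.proj true x) (compl B₁) := .proj hx
    have hx₂ : HasTy Γ (.proj false x) (compl B₂) := .proj hx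
    have hα₁ := hasTy_alphaT B₁ h₂ hx₁
    have hα₂ := hasTy_alphaT B₂ h₂ hx₂
    exact .pair_mono
      (.trans (alphaT_cadd_le B₁ h₁ h₂ hx₁)
        (alphaT_mono B₁ (.refl h₁) (.beta_proj (b := true) hα₁ hα₂)))
      (.trans (alphaT_cadd_le B₂ h₁ h₂ hx₂)
        (alphaT_mono B₂ (.refl h₁) (.beta_proj (b := false) hα₁ hα₂)))
  | .arr A B, Γ, c₁, c₂, x, h₁, h₂, hx => by
    have h₁' := h₁.weaken 0 (pot A)
    have h₂' := h₂.weaken 0 (pot A)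
    have hx' : HasTy (pot A :: Γ) (.app (shift 0 x) (.var 0)) (compl B) :=
      .app (hx.weaken 0 (pot A)) (.var rfl)
    exact .lam_mono (.trans (alphaT_cadd_le B h₁' h₂' hx')
      (alphaT_mono B (.refl h₁') (SizeLe.le_app_shift_lam (hasTy_alphaT B h₂' hx'))))

/-- In the context `c₁ : ℂ, c₂ : ℂ, x : ⟦B̲⟧`, with de Bruijn indices `x = var 0`,
`c₂ = var 1`, `c₁ = var 2`. -/
theorem alpha_is_cost_algebra (B : CTy) :
    SizeLe [compl B, .cost, .cost]
      (alphaT B (.cadd (.var 2) (.var 1)) (.var 0))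
      (alphaT B (.var 2) (alphaT B (.var 1) (.var 0)))
      (compl B) :=
  alphaT_cadd_le B (.var rfl) (.var rfl) (.var rfl)

end PCFc
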